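/- (Comparison of π-weighted and worst-case total variation mixing times) Let 𝒳 have at least two elements and let P be a transition matrix on 𝒳 that is π-reversible (π(x)P(x,y) = π(y)P(y,x) for all x,y), with λ* := max{ |λ| : λ a complex eigenvalue of P, λ ≠ 1 } < 1, γ* := 1 − λ*, and π_min := min_x π(x). Define the π-weighted TV mixing time t̄_mix^{(TV)}(ε,P) := inf{ t > 0 : (1/2)∑_{x,y} π(x)|P^t(x,y) − π(y)| < ε } and the worst-case TV mixing time t_mix^{(TV)}(ε,P) := inf{ t > 0 : max_x (1/2)∑_y |P^t(x,y) − π(y)| < ε }. Then for every ε with 0 < ε < π_min³/4: ((1−γ*)/2) · t_mix^{(TV)}(ε,P) ≤ t̄_mix^{(TV)}(ε,P) ≤ t_mix^{(TV)}(ε,P). -/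

import Mathlib

open Finset

/-- A transition matrix on a finite state space `X`: nonnegative entries, rows sum to one. -/
def IsTransMat {X : Type*} [Fintype X] (M : Matrix X X ℝ) : Prop :=
  (∀ x y, 0 ≤ M x y) ∧ ∀ x, ∑ y, M x y = 1

/-- `μ` is an eigenvalue of the real matrix `P` viewed as a matrix over `ℂ`. -/
def IsEigenvalueC {X : Type*} [Fintype X] [DecidableEq X] (P : Matrix X X ℝ) (μ : ℂ) : Prop :=
  ∃ v : X → ℂ, v ≠ 0 ∧ (P.map fun a => (a : ℂ)).mulVec v = μ • v

/-! In fact `t_mix ≤ 2 · t̄_mix`, which gives the lower bound since `1 - γ* = λ* ≤ 1`.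
Write `d_t(x)` for the total variation distance of `P^t(x, ·)` from `π`, and `d̄_t = ∑ π(x) d_t(x)`.
By stationarity of `π`, `P^{2t}(x, w) - π(w) = ∑_y (P^t(x, y) - π(y)) (P^t(y, w) - π(w))`, so
`d_{2t}(x) ≤ 2 d_t(x) · max_y d_t(y) ≤ 2 (d̄_t / π_min)²`, which is `< ε` once `d̄_t < ε` and
`2ε < π_min²`. The upper bound holds because an average is at most a maximum. -/

namespace Nat

theorem sInf_le_sInf_and_sInf_le_two_mul {A B : Set ℕ} (hBA : B ⊆ A)
    (hAB : ∀ t ∈ A, 2 * t ∈ B) : sInf A ≤ sInf B ∧ sInf B ≤ 2 * sInf A := by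
  rcases A.eq_empty_or_nonempty with rfl | hA
  · simp [Set.subset_empty_iff.mp hBA]
  have hmem : 2 * sInf A ∈ B := hAB _ (Nat.sInf_mem hA)
  exact ⟨Nat.sInf_le (hBA (Nat.sInf_mem ⟨_, hmem⟩)), Nat.sInf_le hmem⟩

end Nat

namespace Matrix

variable {X : Type*} [Fintype X]

noncomputable def rowTV (Q : Matrix X X ℝ) (π : X → ℝ) (x : X) : ℝ :=
  (1 / 2) * ∑ y, |Q x y - π y|

theorem rowTV_nonneg (Q : Matrix X X ℝ) (π : X → ℝ) (x : X) : 0 ≤ rowTV Q π x := by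
  unfold rowTV; positivity

theorem half_sum_sum_mul_abs_eq (Q : Matrix X X ℝ) (π : X → ℝ) :
    (1 / 2) * ∑ x, ∑ y, π x * |Q x y - π y| = ∑ x, π x * rowTV Q π x := by
  simp only [rowTV, Finset.mul_sum]
  exact Finset.sum_congr rfl fun x _ => Finset.sum_congr rfl fun y _ => by ring

theorem sum_mul_rowTV_le_sup' [Nonempty X] (Q : Matrix X X ℝ) {π : X → ℝ}
    (hπ : ∀ x, 0 ≤ π x) (hπ1 : ∑ x, π x = 1) :
    ∑ x, π x * rowTV Q π x ≤ univ.sup' univ_nonempty (rowTV Q π) := calc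
  ∑ x, π x * rowTV Q π x ≤ ∑ x, π x * univ.sup' univ_nonempty (rowTV Q π) :=
    Finset.sum_le_sum fun x _ =>
      mul_le_mul_of_nonneg_left (Finset.le_sup' (rowTV Q π) (mem_univ x)) (hπ x)
  _ = univ.sup' univ_nonempty (rowTV Q π) := by rw [← Finset.sum_mul, hπ1, one_mul]

theorem mul_rowTV_le_sum {π : X → ℝ} (hπ : ∀ x, 0 ≤ π x) (Q : Matrix X X ℝ) (x : X) :
    π x * rowTV Q π x ≤ ∑ z, π z * rowTV Q π z :=
  Finset.single_le_sum (fun z _ => mul_nonneg (hπ z) (rowTV_nonneg Q π z)) (mem_univ x)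

theorem mul_apply_sub_eq_sum_mul_sub {Q R : Matrix X X ℝ} {π : X → ℝ} {x : X}
    (hQ : ∑ y, Q x y = 1) (hR : π ᵥ* R = π) (hπ1 : ∑ y, π y = 1) (w : X) :
    (Q * R) x w - π w = ∑ y, (Q x y - π y) * (R y w - π w) := by
  have hRw : ∑ y, π y * R y w = π w := congrFun hR w
  simp only [sub_mul, mul_sub, Finset.sum_sub_distrib, ← Finset.sum_mul, hQ, hRw, hπ1,
    mul_apply]
  ring

theorem rowTV_mul_le {Q R : Matrix X X ℝ} {π : X → ℝ} {x : X} {c : ℝ}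
    (hQ : ∑ y, Q x y = 1) (hR : π ᵥ* R = π) (hπ1 : ∑ y, π y = 1)
    (hc : ∀ y, rowTV R π y ≤ c) :
    rowTV (Q * R) π x ≤ 2 * rowTV Q π x * c := calc
  rowTV (Q * R) π x ≤ (1 / 2) * ∑ w, ∑ y, |Q x y - π y| * |R y w - π w| := by
    refine mul_le_mul_of_nonneg_left (Finset.sum_le_sum fun w _ => ?_) (by norm_num)
    rw [mul_apply_sub_eq_sum_mul_sub hQ hR hπ1 w]
    simpa only [abs_mul] using
      Finset.abs_sum_le_sum_abs (fun y => (Q x y - π y) * (R y w - π w)) univ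
  _ = ∑ y, |Q x y - π y| * rowTV R π y := by
    simp only [rowTV, Finset.mul_sum]
    rw [Finset.sum_comm]
    exact Finset.sum_congr rfl fun y _ => Finset.sum_congr rfl fun w _ => by ring
  _ ≤ ∑ y, |Q x y - π y| * c :=
    Finset.sum_le_sum fun y _ => mul_le_mul_of_nonneg_left (hc y) (abs_nonneg _)
  _ = 2 * rowTV Q π x * c := by simp only [rowTV, ← Finset.sum_mul]; ring

theorem vecMul_eq_of_reversible {P : Matrix X X ℝ} (hP : IsTransMat P) {π : X → ℝ}
    (hrev : ∀ x y, π x * P x y = π y * P y x) : π ᵥ* P = π := by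
  ext y
  simp only [vecMul, dotProduct, hrev _ y, ← Finset.mul_sum, hP.2, mul_one]

variable [DecidableEq X]

theorem vecMul_pow_eq {P : Matrix X X ℝ} {π : X → ℝ} (h : π ᵥ* P = π) (t : ℕ) :
    π ᵥ* P ^ t = π := by
  induction t with
  | zero => simp
  | succ t ih => rw [pow_succ, ← vecMul_vecMul, ih, h]

theorem rowTV_pow_two_mul_lt {P : Matrix X X ℝ} (hP : IsTransMat P) {π : X → ℝ}
    (hrev : ∀ x y, π x * P x y = π y * P y x) (hπ1 : ∑ x, π x = 1)
    {m ε : ℝ} (hm : 0 < m) (hmπ : ∀ x, m ≤ π x) (hεm : 2 * ε < m ^ 2) {t : ℕ}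
    (ht : ∑ x, π x * rowTV (P ^ t) π x < ε) (x : X) :
    rowTV (P ^ (2 * t)) π x < ε := by
  set δ := ∑ z, π z * rowTV (P ^ t) π z
  have hδ : 0 ≤ δ := Finset.sum_nonneg fun z _ =>
    mul_nonneg (hm.le.trans (hmπ z)) (rowTV_nonneg _ π z)
  have hpoint : ∀ y, rowTV (P ^ t) π y ≤ δ / m := fun y => by
    rw [le_div_iff₀ hm]
    calc rowTV (P ^ t) π y * m ≤ π y * rowTV (P ^ t) π y := by
          rw [mul_comm]; exact mul_le_mul_of_nonneg_right (hmπ y) (rowTV_nonneg _ π y)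
      _ ≤ δ := mul_rowTV_le_sum (fun z => hm.le.trans (hmπ z)) _ y
  have hstat : π ᵥ* P ^ t = π := vecMul_pow_eq (vecMul_eq_of_reversible hP hrev) t
  calc rowTV (P ^ (2 * t)) π x
      ≤ 2 * rowTV (P ^ t) π x * (δ / m) := by
        rw [two_mul, pow_add]
        exact rowTV_mul_le
          (sum_row_of_mem_rowStochastic (pow_mem (mem_rowStochastic_iff_sum.mpr hP) t) x)
          hstat hπ1 hpoint
    _ ≤ 2 * (δ / m) * (δ / m) := by gcongr; exact hpoint x
    _ = 2 * δ ^ 2 / m ^ 2 := by field_simp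
    _ < ε := by
        rw [div_lt_iff₀ (by positivity)]
        have hε : 0 < ε := hδ.trans_lt ht
        nlinarith [mul_lt_mul_of_pos_left hεm hε, mul_self_lt_mul_self hδ ht]

end Matrix

theorem stmt19_general {X : Type*} [Fintype X] [DecidableEq X] [Nonempty X]
    (π : X → ℝ) (hπ : ∀ x, 0 < π x) (hπ1 : ∑ x, π x = 1)
    (P : Matrix X X ℝ) (hP : IsTransMat P)
    (hrev : ∀ x y, π x * P x y = π y * P y x)
    (lstar : ℝ)
    (hls : lstar < 1)
    (gstar : ℝ) (hgstar : gstar = 1 - lstar)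
    (pimin : ℝ) (hpimin : pimin = Finset.univ.inf' Finset.univ_nonempty π)
    (ε : ℝ) (hε' : ε < pimin ^ 3 / 4)
    (tbar : ℕ)
    (htbar : tbar = sInf {t : ℕ | 0 < t ∧
      (1 / 2) * ∑ x, ∑ y, π x * |(P ^ t) x y - π y| < ε})
    (tmix : ℕ)
    (htmix : tmix = sInf {t : ℕ | 0 < t ∧
      (Finset.univ.sup' Finset.univ_nonempty fun x =>
        (1 / 2) * ∑ y, |(P ^ t) x y - π y|) < ε}) :
    (1 - gstar) / 2 * (tmix : ℝ) ≤ (tbar : ℝ) ∧ tbar ≤ tmix := by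
  have hmin : ∀ x, pimin ≤ π x := fun x => hpimin ▸ Finset.inf'_le _ (mem_univ x)
  have hmin_pos : 0 < pimin := hpimin ▸ (Finset.lt_inf'_iff _).mpr fun x _ => hπ x
  have hmin_le_one : pimin ≤ 1 := (hmin (Classical.arbitrary X)).trans <|
    hπ1 ▸ Finset.single_le_sum (fun x _ => (hπ x).le) (mem_univ _)
  have hεm : 2 * ε < pimin ^ 2 := by nlinarith [pow_le_pow_left₀ hmin_pos.le hmin_le_one 2]
  obtain ⟨hle, hle_two⟩ := Nat.sInf_le_sInf_and_sInf_le_two_mul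
    (A := {t : ℕ | 0 < t ∧ (1 / 2) * ∑ x, ∑ y, π x * |(P ^ t) x y - π y| < ε})
    (B := {t : ℕ | 0 < t ∧ (univ.sup' univ_nonempty fun x =>
      (1 / 2) * ∑ y, |(P ^ t) x y - π y|) < ε})
    (fun t ⟨ht, hlt⟩ => ⟨ht, by
      rw [Matrix.half_sum_sum_mul_abs_eq]
      exact (Matrix.sum_mul_rowTV_le_sup' _ (fun x => (hπ x).le) hπ1).trans_lt hlt⟩)
    (fun t ⟨ht, hlt⟩ => ⟨by omega, (Finset.sup'_lt_iff _).mpr fun x _ =>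
      Matrix.rowTV_pow_two_mul_lt hP hrev hπ1 hmin_pos hmin hεm
        (Matrix.half_sum_sum_mul_abs_eq (P ^ t) π ▸ hlt) x⟩)
  rw [← htbar, ← htmix] at hle hle_two
  refine ⟨?_, hle⟩
  have htmix_le : (tmix : ℝ) ≤ 2 * tbar := by exact_mod_cast hle_two
  rw [hgstar]
  nlinarith [Nat.cast_nonneg (α := ℝ) tmix]

/-- Comparison between the π-weighted and the worst-case total variation mixing times of a
reversible chain. -/
theorem stmt19 {X : Type*} [Fintype X] [DecidableEq X] [Nonempty X]
    (hcard : 1 < Fintype.card X)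
    (π : X → ℝ) (hπ : ∀ x, 0 < π x) (hπ1 : ∑ x, π x = 1)
    (P : Matrix X X ℝ) (hP : IsTransMat P)
    (hrev : ∀ x y, π x * P x y = π y * P y x)
    (lstar : ℝ)
    (hlstar : lstar = sSup {r : ℝ | ∃ μ : ℂ, μ ≠ 1 ∧ IsEigenvalueC P μ ∧ r = ‖μ‖})
    (hls : lstar < 1)
    (gstar : ℝ) (hgstar : gstar = 1 - lstar)
    (pimin : ℝ) (hpimin : pimin = Finset.univ.inf' Finset.univ_nonempty π)
    (ε : ℝ) (hε : 0 < ε) (hε' : ε < pimin ^ 3 / 4)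
    (tbar : ℕ)
    (htbar : tbar = sInf {t : ℕ | 0 < t ∧
      (1 / 2) * ∑ x, ∑ y, π x * |(P ^ t) x y - π y| < ε})
    (tmix : ℕ)
    (htmix : tmix = sInf {t : ℕ | 0 < t ∧
      (Finset.univ.sup' Finset.univ_nonempty fun x =>
        (1 / 2) * ∑ y, |(P ^ t) x y - π y|) < ε}) :
    (1 - gstar) / 2 * (tmix : ℝ) ≤ (tbar : ℝ) ∧ tbar ≤ tmix :=
  stmt19_general π hπ hπ1 P hP hrev lstar hls gstar hgstar pimin hpimin ε hε' tbar htbar tmix htmix
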